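/- arXiv:1407.7263 — 2 statements merged into one kernel-verified Lean document; each statement's English description precedes it below -/
import Mathlib

section
/- For every integer k ≥ 3 there exists a connected finite simple identifiable graph G of order n = 11k + 1, with girth at least 5, minimum degree at least 3, and identifying code number γID(G) = 5k = (5/11)·(n − 1). (In particular, there are infinitely many connected graphs of girth at least 5 and minimum degree at least 3 attaining γID(G) = (5/11)·(n − 1).) -/
/-- A graph is *identifiable* if no two distinct vertices have the same closed
neighbourhood. -/
def SimpleGraph.Identifiable {V : Type*} (G : SimpleGraph V) : Prop :=
  ∀ u v : V, insert u (G.neighborSet u) = insert v (G.neighborSet v) → u = v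

/-- A set of vertices is *dominating* if every vertex is equal or adjacent to a
member of the set. -/
def SimpleGraph.DominatingSet {V : Type*} (G : SimpleGraph V) (D : Set V) : Prop :=
  ∀ v : V, ∃ d ∈ D, d = v ∨ G.Adj d v

/-- A set `C` is an *identifying code* if it is dominating and every two distinct
vertices have different closed neighbourhoods within `C`. -/
def SimpleGraph.IdentifyingCode {V : Type*} (G : SimpleGraph V) (C : Set V) : Prop :=
  G.DominatingSet C ∧
    ∀ u v : V, u ≠ v →
      insert u (G.neighborSet u) ∩ C ≠ insert v (G.neighborSet v) ∩ C

/-- The identifying code number: the minimum size of an identifying code. -/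
noncomputable def SimpleGraph.gammaID {V : Type*} (G : SimpleGraph V) : ℕ :=
  sInf {k : ℕ | ∃ C : Set V, G.IdentifyingCode C ∧ C.ncard = k}

/-!
The graph `G11^k` of the paper is `subdividedPetersen.hubCopies 0 (Fin k)`: `k` copies of `P11`
whose degree-two vertices `x` are joined to a new hub `y`. Connectivity, girth and minimum degree
are inherited from `P11`, and five vertices of each copy, `x` among them, form an identifying
code of size `5k`.

Conversely, an identifying code `C` meets each copy in a set `L` that dominates and separates the
ten Petersen vertices. At most `|L|` of their ten traces are singletons, so the traces have total
size at least `20 - |L|`. Counted from `L` instead, that total is at most `4|L|`, less one for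
each vertex of `L ∩ N[x]`, whose closed neighbourhood has at most three Petersen vertices. Hence
`20 + |N[x] ∩ L| ≤ 5|L|`: every copy carries at least four code vertices, and five if it meets
`N[x]`. If `y ∉ C` every copy has to dominate its `x` from inside, and if `y ∈ C` at most one copy
can miss `N[x]`, since there `x` has trace `{y}`. Either way `|C| ≥ 5k`.
-/

open Finset

theorem Set.ncard_eq_sum_ite {α : Type*} [Fintype α] (s : Set α) [DecidablePred (· ∈ s)] :
    s.ncard = ∑ a, if a ∈ s then 1 else 0 := by
  rw [sum_boole, Set.ncard_eq_toFinset_card', Set.filter_mem_univ_eq_toFinset, Nat.cast_id]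

namespace SimpleGraph

local notation "N[" G ", " v "]" => insert v (SimpleGraph.neighborSet G v)

variable {V : Type*} (G : SimpleGraph V)

def IdentifiesOn (C T : Set V) : Prop :=
  (∀ v ∈ T, (N[G, v] ∩ C).Nonempty) ∧ T.Pairwise fun u v => N[G, u] ∩ C ≠ N[G, v] ∩ C

def NoFourCycles : Prop :=
  ∀ a b c d, a ≠ c → b ≠ d → G.Adj a b → G.Adj b c → G.Adj c d → ¬ G.Adj d a

variable {G}

theorem cliqueFree_three_iff :
    G.CliqueFree 3 ↔ ∀ a b c, G.Adj a b → G.Adj b c → ¬ G.Adj c a := by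
  classical
  refine ⟨fun h a b c hab hbc hca =>
    h {a, b, c} (is3Clique_triple_iff.2 ⟨hab, hca.symm, hbc⟩), fun h s hs => ?_⟩
  obtain ⟨a, b, c, hab, hac, hbc, -⟩ := is3Clique_iff.1 hs
  exact h a b c hab hbc hac.symm

theorem five_le_egirth (h3 : G.CliqueFree 3) (h4 : G.NoFourCycles) : 5 ≤ G.egirth := by
  rw [le_egirth]
  intro a w hw
  have := hw.three_le_length
  by_contra! hlt
  obtain hl | hl : w.length = 3 ∨ w.length = 4 := by
    have : w.length < 5 := by exact_mod_cast hlt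
    omega
  · obtain ⟨s, hs⟩ := is3Clique_iff_exists_cycle_length_three.2 ⟨a, w, hw, hl⟩
    exact h3 s hs
  · match w, hw, hl with
    | .cons hab (.cons hbc (.cons hcd (.cons hda .nil))), hw, _ =>
      have hnd := hw.support_nodup
      simp only [Walk.support_cons, Walk.support_nil, List.tail_cons, List.nodup_cons,
        List.mem_cons, List.not_mem_nil, not_or, not_false_eq_true, and_true] at hnd
      obtain ⟨⟨-, hbd, -⟩, ⟨-, hca⟩, -⟩ := hnd
      exact h4 _ _ _ _ (Ne.symm hca) hbd hab hbc hcd hda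

theorem identifiable_of_cliqueFree_three (h3 : G.CliqueFree 3)
    (hdeg : ∀ v, 2 ≤ (G.neighborSet v).ncard) : G.Identifiable := by
  intro u v huv
  by_contra hne
  have hu : u ∈ N[G, v] := huv ▸ Set.mem_insert u _
  obtain ⟨w, huw, hwv⟩ := Set.exists_ne_of_one_lt_ncard (hdeg u) v
  have hw : w ∈ N[G, v] := huv ▸ Set.mem_insert_of_mem u huw
  exact cliqueFree_three_iff.1 h3 v u w (hu.resolve_left hne) huw (hw.resolve_left hwv).symm

theorem connected_of_forall_exists_adj_lt [Preorder V] [WellFoundedLT V] (x : V)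
    (h : ∀ a ≠ x, ∃ b, G.Adj a b ∧ b < a) : G.Connected := by
  have hreach (a : V) : G.Reachable a x := by
    induction a using WellFoundedLT.induction with
    | ind a ih =>
      by_cases hax : a = x
      · exact hax ▸ Reachable.refl a
      · obtain ⟨b, hab, hba⟩ := h a hax
        exact hab.reachable.trans (ih b hba)
  exact (connected_iff G).2 ⟨fun u v => (hreach u).trans (hreach v).symm, ⟨x⟩⟩

theorem identifyingCode_iff_identifiesOn_univ {C : Set V} :
    G.IdentifyingCode C ↔ G.IdentifiesOn C Set.univ := by
  simp only [IdentifyingCode, IdentifiesOn, DominatingSet, Set.pairwise_univ, Pairwise,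
    Set.mem_univ, true_implies, Set.Nonempty, Set.mem_inter_iff, Set.mem_insert_iff,
    mem_neighborSet, eq_comm, and_comm]
  exact and_congr_left' <| forall_congr' fun v => exists_congr fun d =>
    and_congr_right' <| or_congr_right <| G.adj_comm d v

theorem identifyingCode_iff_exists_separating {C : Set V} :
    G.IdentifyingCode C ↔ G.DominatingSet C ∧
      ∀ u v, u ≠ v → ∃ c ∈ C, ¬ ((c = u ∨ G.Adj u c) ↔ (c = v ∨ G.Adj v c)) := by
  simp only [IdentifyingCode, Ne, Set.ext_iff, Set.mem_inter_iff, Set.mem_insert_iff,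
    mem_neighborSet, not_forall, exists_prop, and_congr_left_iff]

theorem gammaID_eq_of_identifyingCode {C : Set V} (hC : G.IdentifyingCode C)
    (hmin : ∀ D, G.IdentifyingCode D → C.ncard ≤ D.ncard) : G.gammaID = C.ncard :=
  IsLeast.csInf_eq ⟨⟨C, hC, rfl⟩, by rintro _ ⟨D, hD, rfl⟩; exact hmin D hD⟩

theorem IdentifiesOn.two_mul_card_le [DecidableEq V] [DecidableRel G.Adj] {C T : Finset V}
    (h : G.IdentifiesOn C T) :
    2 * #T ≤ #C + ∑ c ∈ C, #{v ∈ T | v = c ∨ G.Adj c v} := by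
  -- `tr v` is the trace of `v`; singleton traces are distinct elements of `C.powersetCard 1`
  set tr : V → Finset V := fun v => {c ∈ C | c = v ∨ G.Adj v c}
  have coe_tr (v : V) : (tr v : Set V) = N[G, v] ∩ C := by
    ext c; simp [tr, and_comm]
  have one_le_card_tr : ∀ v ∈ T, 1 ≤ #(tr v) := fun v hv => by
    rw [Nat.one_le_iff_ne_zero, Ne, card_eq_zero, ← coe_eq_empty, coe_tr,
      ← Set.not_nonempty_iff_eq_empty, not_not]
    exact h.1 v hv
  have tr_injOn : Set.InjOn tr T := fun u hu v hv huv => by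
    by_contra hne
    exact h.2 hu hv hne (by rw [← coe_tr, ← coe_tr, huv])
  have card_singleton_traces : #{v ∈ T | #(tr v) = 1} ≤ #C :=
    calc #{v ∈ T | #(tr v) = 1} ≤ #(C.powersetCard 1) := by
          refine card_le_card_of_injOn tr (fun v hv => ?_)
            (tr_injOn.mono (coe_subset.2 (filter_subset _ _)))
          exact mem_powersetCard.2 ⟨filter_subset _ _, (mem_filter.1 hv).2⟩
      _ = #C := by simp
  have double_count : ∑ v ∈ T, #(tr v) = ∑ c ∈ C, #{v ∈ T | v = c ∨ G.Adj c v} := by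
    refine (sum_card_bipartiteAbove_eq_sum_card_bipartiteBelow (s := T) (t := C)
      (r := fun v c => c = v ∨ G.Adj v c)).trans (sum_congr rfl fun c _ => ?_)
    exact congrArg card (filter_congr fun v _ => by rw [eq_comm, G.adj_comm])
  calc 2 * #T = ∑ v ∈ T, 2 := by rw [sum_const, smul_eq_mul, mul_comm]
    _ ≤ ∑ v ∈ T, (#(tr v) + if #(tr v) = 1 then 1 else 0) := by
        refine sum_le_sum fun v hv => ?_
        have := one_le_card_tr v hv
        split_ifs <;> omega
    _ ≤ #C + ∑ c ∈ C, #{v ∈ T | v = c ∨ G.Adj c v} := by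
        rw [sum_add_distrib, sum_boole, double_count, add_comm]
        simpa using card_singleton_traces

variable {W ι : Type*} (H : SimpleGraph W) (x : W) (ι)

def hubCopies : SimpleGraph (ι × W ⊕ Unit) where
  Adj
    | .inl (i, a), .inl (j, b) => i = j ∧ H.Adj a b
    | .inl (_, a), .inr _ => a = x
    | .inr _, .inl (_, b) => b = x
    | .inr _, .inr _ => False
  symm := ⟨by rintro (⟨i, a⟩ | _) (⟨j, b⟩ | _) h <;> simp_all [H.adj_comm]⟩
  loopless := ⟨by rintro (⟨i, a⟩ | _) h <;> simp_all⟩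

variable {H x ι}

@[simp] theorem hubCopies_adj_inl_inl {i j : ι} {a b : W} :
    (H.hubCopies x ι).Adj (.inl (i, a)) (.inl (j, b)) ↔ i = j ∧ H.Adj a b := Iff.rfl

@[simp] theorem hubCopies_adj_inl_inr {i : ι} {a : W} {u : Unit} :
    (H.hubCopies x ι).Adj (.inl (i, a)) (.inr u) ↔ a = x := Iff.rfl

@[simp] theorem hubCopies_adj_inr_inl {j : ι} {b : W} {u : Unit} :
    (H.hubCopies x ι).Adj (.inr u) (.inl (j, b)) ↔ b = x := Iff.rfl

@[simp] theorem hubCopies_not_adj_inr_inr {u u' : Unit} :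
    ¬ (H.hubCopies x ι).Adj (.inr u) (.inr u') := id

theorem hubCopies_connected (hH : H.Connected) : (H.hubCopies x ι).Connected := by
  have hreach : ∀ v, (H.hubCopies x ι).Reachable v (.inr ()) := by
    rintro (⟨i, a⟩ | ⟨⟩)
    · let f : H →g H.hubCopies x ι := ⟨fun b => .inl (i, b), fun h => ⟨rfl, h⟩⟩
      exact ((hH.preconnected a x).map f).trans (hubCopies_adj_inl_inr.2 rfl).reachable
    · rfl
  exact (connected_iff _).2 ⟨fun u v => (hreach u).trans (hreach v).symm, ⟨.inr ()⟩⟩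

theorem hubCopies_cliqueFree_three (hH : H.CliqueFree 3) : (H.hubCopies x ι).CliqueFree 3 := by
  rw [cliqueFree_three_iff] at hH ⊢
  rintro (⟨i, a⟩ | ⟨⟩) (⟨j, b⟩ | ⟨⟩) (⟨k, c⟩ | ⟨⟩) hab hbc hca <;>
    simp only [hubCopies_adj_inl_inl, hubCopies_adj_inl_inr, hubCopies_adj_inr_inl,
      hubCopies_not_adj_inr_inr] at hab hbc hca
  all_goals first | exact hH a b c hab.2 hbc.2 hca.2 | simp_all

theorem hubCopies_noFourCycles (hH : H.NoFourCycles) : (H.hubCopies x ι).NoFourCycles := by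
  rintro (⟨i, a⟩ | ⟨⟩) (⟨j, b⟩ | ⟨⟩) (⟨k, c⟩ | ⟨⟩) (⟨l, d⟩ | ⟨⟩) hac hbd hab hbc hcd hda <;>
    simp only [hubCopies_adj_inl_inl, hubCopies_adj_inl_inr, hubCopies_adj_inr_inl,
      hubCopies_not_adj_inr_inr] at hab hbc hcd hda
  case inl.inl.inl.inl =>
    obtain ⟨rfl, hab⟩ := hab; obtain ⟨rfl, hbc⟩ := hbc; obtain ⟨rfl, hcd⟩ := hcd
    exact hH a b c d (fun h => hac (by rw [h])) (fun h => hbd (by rw [h])) hab hbc hcd hda.2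
  all_goals clear hH; simp_all

theorem le_ncard_neighborSet_hubCopies [Finite ι] [Finite W] {d : ℕ}
    (hW : ∀ a ≠ x, d ≤ (H.neighborSet a).ncard) (hx : d ≤ (H.neighborSet x).ncard + 1)
    (hι : d ≤ Nat.card ι) (v : ι × W ⊕ Unit) :
    d ≤ ((H.hubCopies x ι).neighborSet v).ncard := by
  rcases v with ⟨i, a⟩ | ⟨⟩
  · have hinj : Function.Injective fun b : W => (Sum.inl (i, b) : ι × W ⊕ Unit) :=
      Sum.inl_injective.comp (Prod.mk_right_injective i)
    have himage : (fun b => Sum.inl (i, b)) '' H.neighborSet a ⊆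
        (H.hubCopies x ι).neighborSet (.inl (i, a)) := by
      rintro _ ⟨b, hb, rfl⟩
      exact ⟨rfl, hb⟩
    by_cases hax : a = x
    · subst hax
      calc d ≤ (H.neighborSet a).ncard + 1 := hx
        _ = (insert (Sum.inr ()) ((fun b => Sum.inl (i, b)) '' H.neighborSet a)).ncard := by
          rw [Set.ncard_insert_of_notMem (by simp), Set.ncard_image_of_injective _ hinj]
        _ ≤ ((H.hubCopies a ι).neighborSet (.inl (i, a))).ncard :=
          Set.ncard_le_ncard (Set.insert_subset rfl himage)
    · calc d ≤ (H.neighborSet a).ncard := hW a hax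
        _ = ((fun b => Sum.inl (i, b)) '' H.neighborSet a).ncard :=
          (Set.ncard_image_of_injective _ hinj).symm
        _ ≤ _ := Set.ncard_le_ncard himage
  · calc d ≤ Nat.card ι := hι
      _ = (Set.range fun i => (Sum.inl (i, x) : ι × W ⊕ Unit)).ncard :=
        (Set.ncard_range_of_injective (Sum.inl_injective.comp fun _ _ h => (Prod.mk.inj h).1)).symm
      _ ≤ _ := Set.ncard_le_ncard (by rintro _ ⟨i, rfl⟩; exact rfl)

namespace hubCopies

def slice (C : Set (ι × W ⊕ Unit)) (i : ι) : Set W := {a | Sum.inl (i, a) ∈ C}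

@[simp] theorem mem_slice {C : Set (ι × W ⊕ Unit)} {i : ι} {a : W} :
    a ∈ slice C i ↔ Sum.inl (i, a) ∈ C := Iff.rfl

theorem closedNbhd_inter_inl {C : Set (ι × W ⊕ Unit)} {i : ι} {a : W}
    (h : a ≠ x ∨ Sum.inr () ∉ C) :
    N[H.hubCopies x ι, Sum.inl (i, a)] ∩ C =
      (fun b => Sum.inl (i, b)) '' (N[H, a] ∩ slice C i) := by
  ext (⟨j, b⟩ | ⟨⟩) <;> aesop

theorem closedNbhd_inter_inl_hub {C : Set (ι × W ⊕ Unit)} {i : ι} (hC : Sum.inr () ∈ C) :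
    N[H.hubCopies x ι, Sum.inl (i, x)] ∩ C =
      insert (Sum.inr ()) ((fun b => Sum.inl (i, b)) '' (N[H, x] ∩ slice C i)) := by
  ext (⟨j, b⟩ | ⟨⟩) <;> aesop

theorem identifyingCode_image_inl [Nontrivial ι] {S : Set W} (hS : H.IdentifyingCode S)
    (hxS : x ∈ S) : (H.hubCopies x ι).IdentifyingCode (Sum.inl '' (Set.univ ×ˢ S)) := by
  set C : Set (ι × W ⊕ Unit) := Sum.inl '' (Set.univ ×ˢ S)
  have htrace (i : ι) (a : W) : N[H.hubCopies x ι, Sum.inl (i, a)] ∩ C =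
      (fun b => Sum.inl (i, b)) '' (N[H, a] ∩ S) := by
    rw [closedNbhd_inter_inl (.inr (by simp [C]))]
    congr 2
    ext b
    simp [C]
  have hcopy {i j : ι} {b c : W} (h : (Sum.inl (i, b) : ι × W ⊕ Unit) = Sum.inl (j, c)) :
      i = j :=
    (Prod.mk.inj (Sum.inl_injective h)).1
  rw [identifyingCode_iff_identifiesOn_univ] at hS ⊢
  have hne_hub (i : ι) (a : W) : N[H.hubCopies x ι, Sum.inl (i, a)] ∩ C ≠
      N[H.hubCopies x ι, Sum.inr ()] ∩ C := by
    intro h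
    obtain ⟨j, hji⟩ := exists_ne i
    have hj : Sum.inl (j, x) ∈ N[H.hubCopies x ι, Sum.inr ()] ∩ C :=
      ⟨Or.inr rfl, ⟨(j, x), ⟨trivial, hxS⟩, rfl⟩⟩
    rw [← h, htrace] at hj
    obtain ⟨b, -, hb⟩ := hj
    exact hji (hcopy hb).symm
  refine ⟨?_, ?_⟩
  · rintro (⟨i, a⟩ | ⟨⟩) -
    · rw [htrace]
      exact (hS.1 a trivial).image _
    · obtain ⟨i⟩ := (inferInstance : Nonempty ι)
      exact ⟨Sum.inl (i, x), Or.inr rfl, ⟨(i, x), ⟨trivial, hxS⟩, rfl⟩⟩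
  · rintro (⟨i, a⟩ | ⟨⟩) - (⟨j, b⟩ | ⟨⟩) - hne h
    · rw [htrace, htrace] at h
      obtain rfl | hij := eq_or_ne i j
      · refine hS.2 (Set.mem_univ a) (Set.mem_univ b) (fun hab => hne (by rw [hab])) ?_
        exact Set.image_injective.2 (Sum.inl_injective.comp (Prod.mk_right_injective i)) h
      · obtain ⟨c, hc⟩ := hS.1 a trivial
        obtain ⟨_, -, hc'⟩ := h ▸ Set.mem_image_of_mem (fun b => Sum.inl (i, b)) hc
        exact hij (hcopy hc').symm
    · exact hne_hub i a h
    · exact hne_hub j b h.symm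
    · exact hne rfl

theorem identifiesOn_slice {C : Set (ι × W ⊕ Unit)} (hC : (H.hubCopies x ι).IdentifyingCode C)
    (i : ι) : H.IdentifiesOn (slice C i) {x}ᶜ := by
  rw [identifyingCode_iff_identifiesOn_univ] at hC
  refine ⟨fun a ha => ?_, fun a ha b hb hab h => ?_⟩
  · have := hC.1 (Sum.inl (i, a)) trivial
    rwa [closedNbhd_inter_inl (.inl ha), Set.image_nonempty] at this
  · refine hC.2 (Set.mem_univ (Sum.inl (i, a))) (Set.mem_univ (Sum.inl (i, b)))
      (fun e => hab (Prod.mk.inj (Sum.inl_injective e)).2) ?_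
    rw [closedNbhd_inter_inl (.inl ha), closedNbhd_inter_inl (.inl hb), h]

theorem closedNbhd_inter_slice_nonempty {C : Set (ι × W ⊕ Unit)}
    (hC : (H.hubCopies x ι).IdentifyingCode C) (hhub : Sum.inr () ∉ C) (i : ι) :
    (N[H, x] ∩ slice C i).Nonempty := by
  have := (identifyingCode_iff_identifiesOn_univ.1 hC).1 (Sum.inl (i, x)) trivial
  rwa [closedNbhd_inter_inl (.inr hhub), Set.image_nonempty] at this

theorem subsingleton_of_hub_mem {C : Set (ι × W ⊕ Unit)}
    (hC : (H.hubCopies x ι).IdentifyingCode C) (hhub : Sum.inr () ∈ C) :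
    {i | N[H, x] ∩ slice C i = ∅}.Subsingleton := by
  intro i hi j hj
  by_contra hij
  refine (identifyingCode_iff_identifiesOn_univ.1 hC).2 (Set.mem_univ (Sum.inl (i, x)))
    (Set.mem_univ (Sum.inl (j, x))) (fun e => hij (Prod.mk.inj (Sum.inl_injective e)).1) ?_
  rw [closedNbhd_inter_inl_hub hhub, closedNbhd_inter_inl_hub hhub, hi.out, hj.out,
    Set.image_empty, Set.image_empty]

open Classical in
theorem ncard_eq_sum_ncard_slice [Fintype ι] [Fintype W] (C : Set (ι × W ⊕ Unit)) :
    C.ncard = ∑ i, (slice C i).ncard + if Sum.inr () ∈ C then 1 else 0 := by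
  rw [Set.ncard_eq_sum_ite C, Fintype.sum_sum_type, Fintype.sum_prod_type]
  congr 1
  exact sum_congr rfl fun i _ => (Set.ncard_eq_sum_ite _).symm

theorem le_ncard_of_identifyingCode [Fintype ι] [Fintype W] {m : ℕ}
    (hoff : ∀ L : Set W, H.IdentifiesOn L {x}ᶜ → m ≤ L.ncard)
    (hmeet : ∀ L : Set W, H.IdentifiesOn L {x}ᶜ → (N[H, x] ∩ L).Nonempty →
      m + 1 ≤ L.ncard)
    {C : Set (ι × W ⊕ Unit)} (hC : (H.hubCopies x ι).IdentifyingCode C) :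
    (m + 1) * Fintype.card ι ≤ C.ncard := by
  classical
  have hgood (i : ι) (hi : (N[H, x] ∩ slice C i).Nonempty) : m + 1 ≤ (slice C i).ncard :=
    hmeet _ (identifiesOn_slice hC i) hi
  have hsum : (m + 1) * Fintype.card ι = ∑ _ : ι, (m + 1) := by simp [mul_comm]
  rw [ncard_eq_sum_ncard_slice, hsum]
  by_cases hhub : Sum.inr () ∈ C
  · rw [if_pos hhub]
    by_cases hbad : ∃ i₀, N[H, x] ∩ slice C i₀ = ∅
    · obtain ⟨i₀, hi₀⟩ := hbad
      have hle (i : ι) : m + 1 ≤ (slice C i).ncard + if i = i₀ then 1 else 0 := by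
        split_ifs with hii₀
        · exact Nat.add_le_add_right (hoff _ (identifiesOn_slice hC i)) 1
        · refine (hgood i (Set.nonempty_iff_ne_empty.2 fun hi => ?_)).trans (Nat.le_add_right _ _)
          exact hii₀ (subsingleton_of_hub_mem hC hhub hi hi₀)
      calc ∑ _ : ι, (m + 1) ≤ ∑ i, ((slice C i).ncard + if i = i₀ then 1 else 0) :=
            sum_le_sum fun i _ => hle i
        _ = ∑ i, (slice C i).ncard + 1 := by rw [sum_add_distrib, sum_ite_eq']; simp
    · refine (sum_le_sum fun i _ => ?_).trans (Nat.le_add_right _ _)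
      exact hgood i (Set.nonempty_iff_ne_empty.2 fun hi => hbad ⟨i, hi⟩)
  · rw [if_neg hhub, add_zero]
    exact sum_le_sum fun i _ => hgood i (closedNbhd_inter_slice_nonempty hC hhub i)

end hubCopies

/-- `x = 0` subdivides the edge `u₀u₁`, `uᵢ = i + 1` and `vᵢ = i + 6`. In this numbering
every vertex other than `x` has a smaller neighbour. -/
def subdividedPetersenNbrs : Fin 11 → Finset (Fin 11)
  | 0 => {1, 2}
  | 1 => {0, 5, 6}
  | 2 => {0, 3, 7}
  | 3 => {2, 4, 8}
  | 4 => {3, 5, 9}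
  | 5 => {4, 1, 10}
  | 6 => {1, 8, 9}
  | 7 => {2, 9, 10}
  | 8 => {3, 10, 6}
  | 9 => {4, 6, 7}
  | 10 => {5, 7, 8}

def subdividedPetersen : SimpleGraph (Fin 11) where
  Adj a b := b ∈ subdividedPetersenNbrs a
  symm := ⟨by decide⟩
  loopless := ⟨by decide⟩

instance : DecidableRel subdividedPetersen.Adj := fun a b =>
  inferInstanceAs (Decidable (b ∈ subdividedPetersenNbrs a))

theorem subdividedPetersen_cliqueFree_three : subdividedPetersen.CliqueFree 3 :=
  cliqueFree_three_iff.2 (by decide)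

theorem subdividedPetersen_noFourCycles : subdividedPetersen.NoFourCycles := by
  unfold NoFourCycles
  decide

theorem subdividedPetersen_connected : subdividedPetersen.Connected :=
  connected_of_forall_exists_adj_lt 0 (by decide)

theorem subdividedPetersen_ncard_neighborSet (a : Fin 11) :
    (subdividedPetersen.neighborSet a).ncard = if a = 0 then 2 else 3 := by
  rw [Set.ncard_eq_toFinset_card']
  revert a
  decide

theorem identifyingCode_subdividedPetersen :
    subdividedPetersen.IdentifyingCode ↑({0, 3, 5, 6, 7} : Finset (Fin 11)) := by
  simp only [identifyingCode_iff_exists_separating, DominatingSet, Finset.mem_coe]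
  decide

theorem subdividedPetersen_card_closedNbhd_add_le (c : Fin 11) :
    #{v ∈ ({0}ᶜ : Finset (Fin 11)) | v = c ∨ subdividedPetersen.Adj c v} +
      (if c = 0 ∨ subdividedPetersen.Adj 0 c then 1 else 0) ≤ 4 := by
  revert c
  decide

theorem subdividedPetersen_twenty_add_le {L : Set (Fin 11)}
    (h : subdividedPetersen.IdentifiesOn L {0}ᶜ) :
    20 + (N[subdividedPetersen, 0] ∩ L).ncard ≤ 5 * L.ncard := by
  classical
  have hcount := IdentifiesOn.two_mul_card_le (C := L.toFinset) (T := {0}ᶜ) (by simpa using h)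
  have hsum := sum_le_sum fun c (_ : c ∈ L.toFinset) =>
    subdividedPetersen_card_closedNbhd_add_le c
  rw [sum_add_distrib, sum_boole, Nat.cast_id, sum_const, smul_eq_mul] at hsum
  have hN : (N[subdividedPetersen, 0] ∩ L).ncard =
      #{c ∈ L.toFinset | c = 0 ∨ subdividedPetersen.Adj 0 c} := by
    rw [Set.ncard_eq_toFinset_card']
    congr 1
    ext c
    simp [and_comm]
  have hT : #({0}ᶜ : Finset (Fin 11)) = 10 := rfl
  rw [hN, Set.ncard_eq_toFinset_card' L]
  omega

theorem three_le_ncard_neighborSet_subdividedPetersen_hubCopies {ι : Type*} [Finite ι]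
    (hι : 3 ≤ Nat.card ι) (v : ι × Fin 11 ⊕ Unit) :
    3 ≤ ((subdividedPetersen.hubCopies 0 ι).neighborSet v).ncard :=
  le_ncard_neighborSet_hubCopies (fun a ha => by simp [subdividedPetersen_ncard_neighborSet, ha])
    (by simp [subdividedPetersen_ncard_neighborSet]) hι v

theorem gammaID_subdividedPetersen_hubCopies {ι : Type*} [Fintype ι] [Nontrivial ι] :
    (subdividedPetersen.hubCopies 0 ι).gammaID = 5 * Fintype.card ι := by
  have hcard : (Sum.inl '' (Set.univ ×ˢ ↑({0, 3, 5, 6, 7} : Finset (Fin 11))) :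
      Set (ι × Fin 11 ⊕ Unit)).ncard = 5 * Fintype.card ι := by
    rw [Set.ncard_image_of_injective _ Sum.inl_injective, Set.ncard_prod, Set.ncard_univ,
      Nat.card_eq_fintype_card, Set.ncard_coe_finset, mul_comm]
    rfl
  rw [← hcard]
  refine gammaID_eq_of_identifyingCode
    (hubCopies.identifyingCode_image_inl identifyingCode_subdividedPetersen (by simp))
    fun D hD => hcard ▸ ?_
  refine hubCopies.le_ncard_of_identifyingCode (m := 4) (fun L hL => ?_) (fun L hL hmeet => ?_) hD
  · have := subdividedPetersen_twenty_add_le hL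
    omega
  · have := subdividedPetersen_twenty_add_le hL
    have := (Set.ncard_pos (Set.toFinite _)).2 hmeet
    omega

end SimpleGraph

open SimpleGraph

/-- Proposition: for every `k ≥ 3` there is a connected identifiable graph of order
`n = 11k+1`, girth at least 5, minimum degree at least 3, and identifying code
number `5k = (5/11)·(n-1)`. -/
theorem exists_connected_graph_gammaID_eq_five_elevenths
    (k : ℕ) (hk : 3 ≤ k) :
    ∃ (V : Type) (inst : Fintype V) (G : SimpleGraph V),
      G.Connected ∧
      G.Identifiable ∧
      @Fintype.card V inst = 11 * k + 1 ∧
      5 ≤ G.egirth ∧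
      (∀ v : V, 3 ≤ (G.neighborSet v).ncard) ∧
      G.gammaID = 5 * k := by
  have : Nontrivial (Fin k) := Fin.nontrivial_iff_two_le.2 (by omega)
  have hdeg := three_le_ncard_neighborSet_subdividedPetersen_hubCopies (ι := Fin k) (by simpa)
  have hcliqueFree := hubCopies_cliqueFree_three (x := 0) (ι := Fin k)
    subdividedPetersen_cliqueFree_three
  refine ⟨Fin k × Fin 11 ⊕ Unit, inferInstance, subdividedPetersen.hubCopies 0 (Fin k),
    hubCopies_connected subdividedPetersen_connected,
    identifiable_of_cliqueFree_three hcliqueFree fun v => (hdeg v).trans' (by norm_num),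
    by simp [mul_comm],
    five_le_egirth hcliqueFree (hubCopies_noFourCycles subdividedPetersen_noFourCycles), hdeg,
    by simp [gammaID_subdividedPetersen_hubCopies]⟩
end

section
/- The graph G12 (on 12 vertices) has identifying code number γID(G12) = 6. -/
/-- The graph `G12` on vertices `0,…,11`: the Hamiltonian cycle `0-1-…-11-0`
together with the chords `{0,4}, {1,8}, {2,6}, {3,10}, {5,9}, {7,11}`. -/
def G12 : SimpleGraph (Fin 12) :=
  SimpleGraph.fromRel (fun a b =>
    b = a + 1 ∨
    (a, b) ∈ ([(0, 4), (1, 8), (2, 6), (3, 10), (5, 9), (7, 11)] :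
      List (Fin 12 × Fin 12)))

/-!
The set `{0, 1, 2, 3, 5, 6}` is an identifying code of `G12`. For the lower bound, encode a set of
vertices of `Fin 12` as a 12-bit mask: the closed neighbourhood of `v` met with a code `C` is the
bitwise `and` of the two masks, so both conditions on an identifying code become arithmetic
conditions on masks, and an exhaustive check of the `2 ^ 12` masks shows that none with at most
five bits set satisfies them.
-/

open Finset

namespace SimpleGraph

variable {V : Type*} {G : SimpleGraph V}

theorem gammaID_eq {k : ℕ} (hcode : ∃ C, G.IdentifyingCode C ∧ C.ncard = k)
    (hle : ∀ C, G.IdentifyingCode C → k ≤ C.ncard) : G.gammaID = k := by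
  refine IsLeast.csInf_eq ⟨hcode, ?_⟩
  rintro _ ⟨C, hC, rfl⟩
  exact hle C hC

theorem gammaID_eq_of_finset [Finite V] {k : ℕ} (C₀ : Finset V) (hC₀ : G.IdentifyingCode C₀)
    (hcard : #C₀ = k) (hle : ∀ C : Finset V, G.IdentifyingCode C → k ≤ #C) :
    G.gammaID = k := by
  refine gammaID_eq ⟨C₀, hC₀, by rw [Set.ncard_coe_finset, hcard]⟩ fun C hC => ?_
  lift C to Finset V using C.toFinite
  rw [Set.ncard_coe_finset]
  exact hle C hC

section Fintype

variable [Fintype V] [DecidableEq V] [DecidableRel G.Adj]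

theorem closedNbhd_inter_coe (v : V) (C : Finset V) :
    insert v (G.neighborSet v) ∩ ↑C = ↑(insert v (G.neighborFinset v) ∩ C) := by
  simp

theorem dominatingSet_coe_iff (C : Finset V) :
    G.DominatingSet C ↔ ∀ v, insert v (G.neighborFinset v) ∩ C ≠ ∅ := by
  refine forall_congr' fun v => ?_
  rw [← nonempty_iff_ne_empty]
  simp only [Finset.Nonempty, mem_coe, mem_inter, mem_insert, mem_neighborFinset, adj_comm]
  grind

end Fintype

end SimpleGraph

namespace Finset

variable {n : ℕ}

def bitmask (s : Finset (Fin n)) : ℕ := ∑ i ∈ s.map Fin.valEmbedding, 2 ^ i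

theorem testBit_bitmask (s : Finset (Fin n)) (j : ℕ) :
    s.bitmask.testBit j ↔ j ∈ s.map Fin.valEmbedding := by
  rw [bitmask, ← Nat.mem_bitIndices, ← List.mem_toFinset, toFinset_bitIndices_sum_two_pow]

theorem bitmask_injective : Function.Injective (bitmask (n := n)) :=
  fun _ _ h => map_injective Fin.valEmbedding (geomSum_injective le_rfl h)

theorem bitmask_eq_zero_iff {s : Finset (Fin n)} : s.bitmask = 0 ↔ s = ∅ :=
  ⟨fun h => bitmask_injective (h.trans rfl), fun h => h ▸ rfl⟩

theorem bitmask_inter (s t : Finset (Fin n)) : (s ∩ t).bitmask = s.bitmask &&& t.bitmask :=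
  Nat.eq_of_testBit_eq fun j => by
    rw [Bool.eq_iff_iff, Nat.testBit_and, Bool.and_eq_true, testBit_bitmask, testBit_bitmask,
      testBit_bitmask, map_inter, mem_inter]

theorem bitmask_lt_two_pow (s : Finset (Fin n)) : s.bitmask < 2 ^ n :=
  Nat.lt_pow_two_of_testBit _ fun i hi => by
    rw [← Bool.not_eq_true, testBit_bitmask]
    simp only [mem_map, Fin.valEmbedding_apply, not_exists, not_and]
    omega

end Finset

def Nat.popcount (m n : ℕ) : ℕ := #{j ∈ range n | m.testBit j}

theorem Finset.popcount_bitmask {n : ℕ} (s : Finset (Fin n)) : s.bitmask.popcount n = #s := by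
  have : {j ∈ range n | s.bitmask.testBit j} = s.map Fin.valEmbedding := by
    ext j
    simp only [mem_filter, mem_range, testBit_bitmask, and_iff_right_iff_imp, mem_map,
      Fin.valEmbedding_apply]
    rintro ⟨x, -, rfl⟩
    exact x.isLt
  rw [Nat.popcount, this, card_map]

/-- `N v` plays the role of the mask of the closed neighbourhood of `v`. -/
def IsIdentifyingMask {n : ℕ} (N : Fin n → ℕ) (m : ℕ) : Prop :=
  (∀ v, N v &&& m ≠ 0) ∧ ∀ u v, u ≠ v → N u &&& m ≠ N v &&& m

instance {n : ℕ} (N : Fin n → ℕ) : DecidablePred (IsIdentifyingMask N) :=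
  fun _ => inferInstanceAs (Decidable (_ ∧ _))

namespace SimpleGraph

variable {n : ℕ} (G : SimpleGraph (Fin n)) [DecidableRel G.Adj]

def closedNbhdMask (v : Fin n) : ℕ := (insert v (G.neighborFinset v)).bitmask

variable {G}

theorem identifyingCode_iff_isIdentifyingMask {N : Fin n → ℕ}
    (hN : ∀ v, G.closedNbhdMask v = N v) (C : Finset (Fin n)) :
    G.IdentifyingCode C ↔ IsIdentifyingMask N C.bitmask := by
  have hmask (v : Fin n) : N v &&& C.bitmask = (insert v (G.neighborFinset v) ∩ C).bitmask := by
    rw [← hN, closedNbhdMask, bitmask_inter]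
  simp only [IdentifyingCode, dominatingSet_coe_iff, IsIdentifyingMask, closedNbhd_inter_coe,
    hmask, ne_eq, bitmask_injective.eq_iff, bitmask_eq_zero_iff, coe_inj]

theorem le_card_of_identifyingCode {N : Fin n → ℕ} (hN : ∀ v, G.closedNbhdMask v = N v) {k : ℕ}
    (hmask : ∀ m < 2 ^ n, m.popcount n < k → ¬ IsIdentifyingMask N m) (C : Finset (Fin n))
    (hC : G.IdentifyingCode C) : k ≤ #C := by
  rw [← C.popcount_bitmask]
  by_contra! h
  exact hmask _ C.bitmask_lt_two_pow h ((identifyingCode_iff_isIdentifyingMask hN C).1 hC)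

end SimpleGraph

instance : DecidableRel G12.Adj := inferInstanceAs (DecidableRel (SimpleGraph.fromRel _).Adj)

def G12.closedNbhdMaskTable : Fin 12 → ℕ :=
  ![2067, 263, 78, 1052, 57, 624, 228, 2496, 898, 1824, 3592, 3201]

theorem G12.closedNbhdMask_eq_table : ∀ v, G12.closedNbhdMask v = G12.closedNbhdMaskTable v := by
  decide +kernel

set_option maxRecDepth 10000 in
theorem G12.not_isIdentifyingMask_of_popcount_lt :
    ∀ m < 2 ^ 12, m.popcount 12 < 6 → ¬ IsIdentifyingMask G12.closedNbhdMaskTable m := by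
  decide +kernel

/-- Proposition: the graph `G12` has identifying code number 6. -/
theorem gammaID_G12 : G12.gammaID = 6 :=
  SimpleGraph.gammaID_eq_of_finset {0, 1, 2, 3, 5, 6}
    ((SimpleGraph.identifyingCode_iff_isIdentifyingMask G12.closedNbhdMask_eq_table _).2
      (by decide +kernel))
    rfl
    (SimpleGraph.le_card_of_identifyingCode G12.closedNbhdMask_eq_table
      G12.not_isIdentifyingMask_of_popcount_lt)
end
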